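/- arXiv:2108.08067 — 2 statements merged into one kernel-verified Lean document; each statement's English description precedes it below -/
import Mathlib

section
/- In a 2-CNF implication digraph, a contradictory strongly connected component that is source-like (no arc enters it from outside) is also sink-like (no arc leaves it), i.e., it is isolated. -/
/-!
A contradictory literal `x ∈ C` reaches and is reached by `¬x`, so through `x` every literal
of `C ∪ ¬C` reaches every other; maximality of the SCC forces `¬C ⊆ C`. An arc `u → v` leaving
`C` then has the mirror arc `¬v → ¬u` entering `C`.
-/

abbrev Lit (n : ℕ) := Fin n × Bool

def negLit {n : ℕ} (x : Lit n) : Lit n := (x.1, !x.2)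

def Reach {n : ℕ} (E : Lit n → Lit n → Prop) : Lit n → Lit n → Prop :=
  Relation.ReflTransGen E

def IsSCC {n : ℕ} (E : Lit n → Lit n → Prop) (C : Set (Lit n)) : Prop :=
  C.Nonempty ∧ (∀ x ∈ C, ∀ y ∈ C, Reach E x y) ∧
    ∀ D : Set (Lit n), C ⊆ D → (∀ x ∈ D, ∀ y ∈ D, Reach E x y) → D = C

def ContraLit {n : ℕ} (E : Lit n → Lit n → Prop) (x : Lit n) : Prop :=
  Reach E x (negLit x) ∧ Reach E (negLit x) x

/-- No arc enters `C` from outside. -/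
def SourceLike {n : ℕ} (E : Lit n → Lit n → Prop) (C : Set (Lit n)) : Prop :=
  ∀ u ∉ C, ∀ v ∈ C, ¬ E u v

/-- No arc leaves `C`. -/
def SinkLike {n : ℕ} (E : Lit n → Lit n → Prop) (C : Set (Lit n)) : Prop :=
  ∀ u ∈ C, ∀ v ∉ C, ¬ E u v

section ImplicationDigraph

variable {n : ℕ} {E : Lit n → Lit n → Prop}

@[simp]
theorem negLit_negLit (x : Lit n) : negLit (negLit x) = x := by
  simp [negLit]

theorem Reach.negLit_rev (hsym : ∀ k l, E k l → E (negLit l) (negLit k)) {a b : Lit n}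
    (h : Reach E a b) : Reach E (negLit b) (negLit a) := by
  induction h with
  | refl => exact Relation.ReflTransGen.refl
  | tail _ hbc ih => exact Relation.ReflTransGen.head (hsym _ _ hbc) ih

theorem IsSCC.negLit_mem (hsym : ∀ k l, E k l → E (negLit l) (negLit k)) {C : Set (Lit n)}
    (hC : IsSCC E C) {x : Lit n} (hxC : x ∈ C) (hx : ContraLit E x) {y : Lit n} (hy : y ∈ C) :
    negLit y ∈ C := by
  obtain ⟨-, hconn, hmax⟩ := hC
  obtain ⟨hx_neg, hneg_x⟩ := hx
  have to_x : ∀ z ∈ C ∪ negLit '' C, Reach E z x := by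
    rintro z (hz | ⟨w, hw, rfl⟩)
    · exact hconn z hz x hxC
    · exact (Reach.negLit_rev hsym (hconn x hxC w hw)).trans hneg_x
  have from_x : ∀ z ∈ C ∪ negLit '' C, Reach E x z := by
    rintro z (hz | ⟨w, hw, rfl⟩)
    · exact hconn x hxC z hz
    · exact hx_neg.trans (Reach.negLit_rev hsym (hconn w hw x hxC))
  rw [← hmax _ Set.subset_union_left fun a ha b hb => (to_x a ha).trans (from_x b hb)]
  exact Or.inr ⟨y, hy, rfl⟩

theorem SourceLike.sinkLike_of_negLit_mem (hsym : ∀ k l, E k l → E (negLit l) (negLit k))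
    {C : Set (Lit n)} (hsrc : SourceLike E C) (hneg : ∀ y ∈ C, negLit y ∈ C) :
    SinkLike E C := by
  intro u hu v hv huv
  have hnv : negLit v ∉ C := fun h => hv (by simpa using hneg _ h)
  exact hsrc (negLit v) hnv (negLit u) (hneg u hu) (hsym u v huv)

end ImplicationDigraph

/-- A contradictory SCC of an implication digraph that is source-like is also sink-like,
i.e. it is isolated. -/
theorem stmt1 {n : ℕ} (E : Lit n → Lit n → Prop)
    (hsym : ∀ k l, E k l → E (negLit l) (negLit k))
    (C : Set (Lit n)) (hC : IsSCC E C)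
    (hcontra : ∃ x ∈ C, ContraLit E x)
    (hsrc : SourceLike E C) :
    SinkLike E C := by
  obtain ⟨x, hxC, hx⟩ := hcontra
  exact hsrc.sinkLike_of_negLit_mem hsym fun y hy => hC.negLit_mem hsym hxC hx hy
end

section
/- Define the Implication generating function of a sequence (b_n(w)) as B̈(z,w) = Σ_{n≥0} b_n(w)/(1+w)^{n(n-1)} · z^n/(2^n n!), and the Graphic GF of (a_n(w)) as Â(z,w) = Σ_{n≥0} a_n(w)/(1+w)^{binomial(n,2)} · z^n/n!. Then the product Â(z,w)·B̈(z,w) is the Implication GF of the sequence c_n(w) = Σ_{k=0}^n binomial(n,k) 2^k (1+w)^{2k(n-k) + k(k-1)/2} a_k(w) b_{n-k}(w). -/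
/-!
Compare the coefficients of `z^n`. The `k`-th term of the Cauchy product carries
`k!⁻¹ (2^(n-k) (n-k)!)⁻¹ = (2^n n!)⁻¹ C(n,k) 2^k` and `(1+w)^{-(C(k,2) + (n-k)(n-k-1))}`,
and since `n(n-1) = k(k-1) + 2k(n-k) + (n-k)(n-k-1)` the latter is
`(1+w)^{2k(n-k) + C(k,2)} (1+w)^{-n(n-1)}`.
-/

open PowerSeries

noncomputable def Wp : PowerSeries ℚ := 1 + PowerSeries.X

noncomputable def Wi : PowerSeries ℚ := Ring.inverse Wp

/-- The Graphic GF `Σ_n a_n(w) (1+w)^{-C(n,2)} z^n / n!`. -/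
noncomputable def graphicGF (f : ℕ → PowerSeries ℚ) : PowerSeries (PowerSeries ℚ) :=
  PowerSeries.mk fun n => ((n.factorial : ℚ)⁻¹) • (f n * Wi ^ n.choose 2)

/-- The Implication GF `Σ_n b_n(w) (1+w)^{-n(n-1)} z^n / (2^n n!)`. -/
noncomputable def implGF (f : ℕ → PowerSeries ℚ) : PowerSeries (PowerSeries ℚ) :=
  PowerSeries.mk fun n => (((2 : ℚ) ^ n * n.factorial)⁻¹) • (f n * Wi ^ (n * (n - 1)))

lemma Wp_mul_Wi : Wp * Wi = 1 :=
  Ring.mul_inverse_cancel _ (by simp [Wp, PowerSeries.isUnit_iff_constantCoeff])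

lemma Nat.choose_two_add_choose_two (k : ℕ) : k.choose 2 + k.choose 2 = k * (k - 1) := by
  rw [← two_mul, Nat.choose_two_right, Nat.mul_div_cancel' k.even_mul_pred_self.two_dvd]

lemma Nat.add_mul_add_sub_one (k m : ℕ) :
    (k + m) * (k + m - 1) = (2 * k * m + k.choose 2) + (k.choose 2 + m * (m - 1)) := by
  have hk := k.choose_two_add_choose_two
  rcases k with _ | k <;> rcases m with _ | m
  all_goals simp only [Nat.add_sub_cancel, Nat.add_zero, Nat.zero_add,
    Nat.add_succ_sub_one] at hk ⊢
  all_goals linarith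

lemma inv_factorial_mul_inv_two_pow_mul_factorial (k m : ℕ) :
    ((k.factorial : ℚ))⁻¹ * ((2 : ℚ) ^ m * m.factorial)⁻¹
      = ((2 : ℚ) ^ (k + m) * (k + m).factorial)⁻¹ * ((k + m).choose k * 2 ^ k) := by
  have hchoose : ((k + m).choose m : ℚ) ≠ 0 := by
    exact_mod_cast (Nat.choose_pos (Nat.le_add_left m k)).ne'
  rw [← Nat.add_choose_mul_factorial_mul_factorial k m, Nat.choose_symm_add, pow_add]
  push_cast
  field_simp

lemma graphic_term_mul_impl_term {R : Type*} [CommRing R] [Algebra ℚ R] {u v : R}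
    (huv : u * v = 1) (x y : R) (k m : ℕ) :
    ((k.factorial : ℚ)⁻¹ • (x * v ^ k.choose 2))
        * (((2 : ℚ) ^ m * m.factorial)⁻¹ • (y * v ^ (m * (m - 1))))
      = ((2 : ℚ) ^ (k + m) * (k + m).factorial)⁻¹ •
          (((k + m).choose k : R) * 2 ^ k * u ^ (2 * k * m + k.choose 2) * x * y
            * v ^ ((k + m) * (k + m - 1))) := by
  have hcancel : u ^ (2 * k * m + k.choose 2) * v ^ (2 * k * m + k.choose 2) = 1 := by
    rw [← mul_pow, huv, one_pow]
  rw [smul_mul_smul_comm, inv_factorial_mul_inv_two_pow_mul_factorial, mul_smul,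
    Nat.add_mul_add_sub_one, pow_add, pow_add]
  congr 1
  rw [Algebra.smul_def, map_mul, map_pow, map_natCast, map_ofNat]
  linear_combination (-((k + m).choose k : R) * 2 ^ k * x * y * v ^ k.choose 2
    * v ^ (m * (m - 1))) * hcancel

/-- The product of a Graphic GF and an Implication GF is the Implication GF of the
implication-product convolution
`c_n = Σ_k C(n,k) 2^k (1+w)^{2k(n-k) + k(k-1)/2} a_k b_{n-k}`. -/
theorem stmt12 (a b : ℕ → PowerSeries ℚ) :
    graphicGF a * implGF b
      = implGF (fun n => ∑ k ∈ Finset.range (n + 1),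
          (n.choose k : PowerSeries ℚ) * 2 ^ k * Wp ^ (2 * k * (n - k) + k.choose 2)
            * a k * b (n - k)) := by
  ext n : 1
  rw [coeff_mul, Finset.Nat.sum_antidiagonal_eq_sum_range_succ_mk]
  simp only [graphicGF, implGF, coeff_mk, Finset.sum_mul, Finset.smul_sum]
  refine Finset.sum_congr rfl fun k hk => ?_
  obtain ⟨m, rfl⟩ := Nat.exists_eq_add_of_le (Nat.lt_succ_iff.mp (Finset.mem_range.mp hk))
  rw [Nat.add_sub_cancel_left]
  exact graphic_term_mul_impl_term Wp_mul_Wi _ _ k m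
end
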